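/- For every n ∈ ℤ, the following operator identity holds on K, relating the (q,t)-Macdonald operator 𝓜ₙ to its dual Whittaker (t → ∞) limits M_m: (t − 1)·𝓜ₙ = Σ_{j=0}^N (−1)ʲ · t^{N−j} · e_j ∘ M_{n−j}, where e_j denotes the operator of multiplication by the j-th elementary symmetric polynomial e_j(x₁,…,x_N). -/

import Mathlib

/-!
Fix `i`. Multiplying `∏_{k≠i} (t xᵢ − x_k)` by `(t − 1) xᵢ` supplies the missing factor `k = i`,
and by Vieta `∏_k (t xᵢ − x_k) = Σⱼ (−1)ʲ eⱼ (t xᵢ)^{N−j}`. After dividing by `∏_{k≠i} (xᵢ − x_k)`,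
the `j`-th summand `xᵢ^{n−1} xᵢ^{N−j}` is the `i`-th coefficient `xᵢ^{n−j} xᵢ^{N−1}` of `M_{n−j}`,
so the identity holds summand by summand in `i`.
-/

open scoped BigOperators

noncomputable section

/-- The field `F(x₁,…,x_N)` of rational functions in `N` variables over `F`. -/
abbrev RatF (F : Type) [Field F] (N : ℕ) : Type :=
  FractionRing (MvPolynomial (Fin N) F)

/-- The variable `xᵢ` viewed inside the rational function field. -/
noncomputable def Xv (F : Type) [Field F] (N : ℕ) (i : Fin N) : RatF F N :=
  algebraMap (MvPolynomial (Fin N) F) (RatF F N) (MvPolynomial.X i)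

/-- The generalized Macdonald operator `𝓜ₙ`:
`𝓜ₙ f = Σᵢ xᵢⁿ · (Πⱼ≠ᵢ (t·xᵢ − xⱼ)/(xᵢ − xⱼ)) · Γᵢ(f)`. -/
noncomputable def Mac (F : Type) [Field F] (N : ℕ) (t : F)
    (Γ : Fin N → (RatF F N ≃ₐ[F] RatF F N)) (n : ℤ) (f : RatF F N) : RatF F N :=
  ∑ i : Fin N, Xv F N i ^ n *
    (∏ j ∈ Finset.univ.erase i, (t • Xv F N i - Xv F N j) / (Xv F N i - Xv F N j)) *
    Γ i f

/-- The dual Whittaker (`t → ∞`) limit of the Macdonald operator: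
`Mₙ f = Σᵢ xᵢⁿ · (Πⱼ≠ᵢ xᵢ/(xᵢ − xⱼ)) · Γᵢ(f)`. -/
noncomputable def MacW (F : Type) [Field F] (N : ℕ)
    (Γ : Fin N → (RatF F N ≃ₐ[F] RatF F N)) (n : ℤ) (f : RatF F N) : RatF F N :=
  ∑ i : Fin N, Xv F N i ^ n *
    (∏ j ∈ Finset.univ.erase i, Xv F N i / (Xv F N i - Xv F N j)) * Γ i f

open Finset

theorem Finset.prod_sub_eq_sum_esymm {R ι : Type*} [CommRing R] (s : Finset ι) (x : ι → R)
    (y : R) :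
    ∏ k ∈ s, (y - x k) =
      ∑ j ∈ range (#s + 1), (-1) ^ j * (∑ I ∈ s.powersetCard j, ∏ i ∈ I, x i) * y ^ (#s - j) := by
  have h := congrArg (Polynomial.eval y) (Multiset.prod_X_sub_X_eq_sum_esymm (s.val.map x))
  simp only [Polynomial.eval_multiset_prod, Multiset.map_map, Function.comp_def,
    Polynomial.eval_sub, Polynomial.eval_X, Polynomial.eval_C, Polynomial.eval_finsetSum,
    Polynomial.eval_mul, Polynomial.eval_pow, Polynomial.eval_neg, Polynomial.eval_one,
    Multiset.card_map, Finset.esymm_map_val] at h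
  rw [prod_eq_multiset_prod, h, card_def]
  simp only [mul_assoc]

theorem Xv_ne_zero (F : Type) [Field F] (N : ℕ) (i : Fin N) : Xv F N i ≠ 0 :=
  (map_ne_zero_iff _ (IsFractionRing.injective _ _)).mpr (MvPolynomial.X_ne_zero i)

section MacdonaldTerm

variable {K ι : Type*} [Field K] [Fintype ι] [DecidableEq ι]

theorem zpow_sub_mul_pow_pred {x : K} (hx : x ≠ 0) (n : ℤ) {j N : ℕ} (hj : j ≤ N) (hN : 1 ≤ N) :
    x ^ (n - j) * x ^ (N - 1) = x ^ (n - 1) * x ^ (N - j) := by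
  rw [← zpow_natCast, ← zpow_natCast, ← zpow_add₀ hx, ← zpow_add₀ hx]
  congr 1
  push_cast [hj, hN]
  ring

theorem macdonald_term_eq_sum_whittaker_terms (x : ι → K) (t : K) (n : ℤ) {i : ι}
    (hi : x i ≠ 0) :
    (t - 1) * (x i ^ n * ∏ k ∈ univ.erase i, (t * x i - x k) / (x i - x k)) =
      ∑ j ∈ range (Fintype.card ι + 1), (-1) ^ j * t ^ (Fintype.card ι - j) *
        ((∑ I ∈ powersetCard j univ, ∏ k ∈ I, x k) *
          (x i ^ (n - j) * ∏ k ∈ univ.erase i, x i / (x i - x k))) := by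
  set N := Fintype.card ι
  set D := ∏ k ∈ univ.erase i, (x i - x k)
  have hN : 1 ≤ N := Fintype.card_pos_iff.mpr ⟨i⟩
  have hfull : (t - 1) * x i * ∏ k ∈ univ.erase i, (t * x i - x k) =
      ∑ j ∈ range (N + 1), (-1) ^ j * (∑ I ∈ powersetCard j univ, ∏ k ∈ I, x k) *
        (t * x i) ^ (N - j) := by
    rw [sub_one_mul]
    exact (mul_prod_erase univ (fun k => t * x i - x k) (mem_univ i)).trans
      (prod_sub_eq_sum_esymm univ x (t * x i))
  have hxn : x i ^ n = x i ^ (n - 1) * x i := by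
    rw [← zpow_add_one₀ hi, sub_add_cancel]
  rw [prod_div_distrib, prod_div_distrib, prod_const, card_erase_of_mem (mem_univ i), card_univ]
  calc (t - 1) * (x i ^ n * ((∏ k ∈ univ.erase i, (t * x i - x k)) / D))
      = x i ^ (n - 1) / D * ((t - 1) * x i * ∏ k ∈ univ.erase i, (t * x i - x k)) := by
        rw [hxn]; ring
    _ = _ := by
        rw [hfull, mul_sum]
        refine sum_congr rfl fun j hj => ?_
        linear_combination
          -(-1) ^ j * t ^ (N - j) * (∑ I ∈ powersetCard j univ, ∏ k ∈ I, x k) / D *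
            zpow_sub_mul_pow_pred hi n (Nat.lt_succ_iff.mp (mem_range.mp hj)) hN

end MacdonaldTerm

theorem statement15_general (F : Type) [Field F] (t : F) (N : ℕ)
    (Γ : Fin N → (RatF F N ≃ₐ[F] RatF F N))
    (n : ℤ) (f : RatF F N) :
    (t - 1) • Mac F N t Γ n f
      = ∑ j ∈ Finset.range (N + 1),
          ((-1 : F) ^ j * t ^ (N - j)) •
            ((∑ I ∈ Finset.powersetCard j (Finset.univ : Finset (Fin N)),
                ∏ i ∈ I, Xv F N i) * MacW F N Γ (n - j) f) := by
  simp only [Mac, MacW, mul_sum, smul_sum]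
  rw [sum_comm]
  refine sum_congr rfl fun i _ => ?_
  have key := macdonald_term_eq_sum_whittaker_terms (Xv F N) (algebraMap F _ t) n
    (Xv_ne_zero F N i)
  simp only [Fintype.card_fin] at key
  simp only [Algebra.smul_def, map_sub, map_one, map_mul, map_pow, map_neg] at key ⊢
  rw [← mul_assoc, key, sum_mul]
  exact sum_congr rfl fun j _ => by ring

/-- `(t−1)·𝓜ₙ = Σ_{j=0}^N (−1)ʲ t^{N−j} e_j ∘ M_{n−j}`, where `e_j` is
multiplication by the `j`-th elementary symmetric polynomial in `x₁,…,x_N`. -/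
theorem statement15 (F : Type) [Field F] [CharZero F] (q t : F) (hq : q ≠ 0) (ht : t ≠ 0)
    (N : ℕ) (hN : 1 ≤ N)
    (Γ : Fin N → (RatF F N ≃ₐ[F] RatF F N))
    (hΓ : ∀ i j : Fin N, Γ i (Xv F N j) = if j = i then q • Xv F N j else Xv F N j)
    (n : ℤ) (f : RatF F N) :
    (t - 1) • Mac F N t Γ n f
      = ∑ j ∈ Finset.range (N + 1),
          ((-1 : F) ^ j * t ^ (N - j)) •
            ((∑ I ∈ Finset.powersetCard j (Finset.univ : Finset (Fin N)),
                ∏ i ∈ I, Xv F N i) * MacW F N Γ (n - j) f) :=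
  statement15_general F t N Γ n f

end
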